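/- The g-unraveling of an interpretation is tree-like: the graph on the domain of I* whose edges are the union of all roles and their inverses is a tree (connected and acyclic), rooted at the singleton walk (r). -/

import Mathlib

/-- ALCQI concepts: `atLeast k R inv C` is `≥k R.C` when `inv = false`
and `≥k R⁻.C` when `inv = true`. -/
inductive ALCQI (Cn Rn : Type) : Type
  | top : ALCQI Cn Rn
  | bot : ALCQI Cn Rn
  | atom (A : Cn) : ALCQI Cn Rn
  | neg (C : ALCQI Cn Rn) : ALCQI Cn Rn
  | inter (C D : ALCQI Cn Rn) : ALCQI Cn Rn
  | atLeast (k : ℕ) (R : Rn) (inv : Bool) (C : ALCQI Cn Rn) : ALCQI Cn Rn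

/-- An interpretation with binary roles. -/
structure Interp (Cn Rn : Type) : Type 1 where
  Dom : Type
  cInt : Cn → Set Dom
  rInt : Rn → Set (Dom × Dom)

/-- Edges: a role name (`inl`) or an inverse role name (`inr`), interpreted accordingly. -/
def edgeRel {Cn Rn : Type} (I : Interp Cn Rn) : Rn ⊕ Rn → Set (I.Dom × I.Dom)
  | .inl R => I.rInt R
  | .inr R => { p | (p.2, p.1) ∈ I.rInt R }

/-- The inverse of an edge label. -/
def invE {Rn : Type} : Rn ⊕ Rn → Rn ⊕ Rn
  | .inl R => .inr R
  | .inr R => .inl R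

/-- Semantics of ALCQI; "at least `k` elements" is witnessed by an injection from `Fin k`. -/
def qsem {Cn Rn : Type} (I : Interp Cn Rn) : ALCQI Cn Rn → Set I.Dom
  | .top => Set.univ
  | .bot => ∅
  | .atom A => I.cInt A
  | .neg C => (qsem I C)ᶜ
  | .inter C D => qsem I C ∩ qsem I D
  | .atLeast k R b C =>
      { u | ∃ f : Fin k → I.Dom, Function.Injective f ∧
          ∀ i, (u, f i) ∈ edgeRel I (if b then .inr R else .inl R) ∧ f i ∈ qsem I C }

/-- `good I u w` : `w` is a valid non-backtracking walk starting at `u`. -/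
def good {Cn Rn : Type} (I : Interp Cn Rn) : I.Dom → List ((Rn ⊕ Rn) × I.Dom) → Prop
  | _, [] => True
  | u, (e, v) :: rest =>
      (u, v) ∈ edgeRel I e ∧
      (match rest with
        | [] => True
        | (e', v') :: _ => ¬(e' = invE e ∧ v' = u)) ∧
      good I v rest

/-- The last element of a walk starting at `u`. -/
def lastOf {Cn Rn : Type} (I : Interp Cn Rn) : I.Dom → List ((Rn ⊕ Rn) × I.Dom) → I.Dom
  | u, [] => u
  | _, (_, v) :: rest => lastOf I v rest

/-- The g-unraveling of `I` from `r`: the domain consists of all finite non-backtracking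
walks from `r`; atomic concepts hold at a walk iff they hold at its last element; a role
`R` connects `s̄` to `s̄'` iff `s̄' = s̄ ++ [(R, u)]` or `s̄ = s̄' ++ [(R⁻, u)]` for some `u`. -/
def unravel {Cn Rn : Type} (I : Interp Cn Rn) (r : I.Dom) : Interp Cn Rn where
  Dom := { w : List ((Rn ⊕ Rn) × I.Dom) // good I r w }
  cInt A := { w | lastOf I r w.1 ∈ I.cInt A }
  rInt R := { p | (∃ u, p.2.1 = p.1.1 ++ [(Sum.inl R, u)]) ∨
                  (∃ u, p.1.1 = p.2.1 ++ [(Sum.inr R, u)]) }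


/-! In `I*` a role only ever joins a walk to a one-step extension of it, so `I*` is the graph of
one-step extensions on the prefix-closed set of non-backtracking walks. Each nonempty walk is
adjacent to its longest proper prefix, which gives connectivity by induction on the walk. On a
cycle, a vertex of maximal length has two distinct neighbours on the cycle, both strictly shorter;
but the only shorter neighbour of a walk is its longest proper prefix. -/

namespace SimpleGraph

variable {V : Type*} {G : SimpleGraph V}

theorem isAcyclic_of_unique_lower_neighbor (h : V → ℕ)
    (hne : ∀ ⦃v w⦄, G.Adj v w → h v ≠ h w)
    (hunique : ∀ ⦃v w w'⦄, G.Adj v w → G.Adj v w' → h w < h v → h w' < h v → w = w') :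
    G.IsAcyclic := by
  classical
  intro v c hc
  obtain ⟨m, hm, hmax⟩ := c.support.toFinset.exists_max_image h ⟨v, by simp⟩
  rw [List.mem_toFinset] at hm
  have hc' := hc.rotate hm
  set c' := c.rotate m hm
  have hlower : ∀ i, G.Adj m (c'.getVert i) → h (c'.getVert i) < h m := fun i hadj =>
    have hi : c'.getVert i ∈ c.support :=
      (c.mem_support_rotate_iff m hm).1 (c'.getVert_mem_support i)
    (hmax _ (List.mem_toFinset.2 hi)).lt_of_ne (hne hadj).symm
  have hsnd := c'.adj_snd hc'.not_nil
  have hpen := (c'.adj_penultimate hc'.not_nil).symm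
  exact hc'.snd_ne_penultimate (hunique hsnd hpen (hlower _ hsnd) (hlower _ hpen))

end SimpleGraph

section PrefixGraph

variable {α : Type*} {p : List α → Prop}

variable (p) in
def prefixGraph : SimpleGraph {l // p l} :=
  SimpleGraph.fromRel fun l l' => ∃ a, l'.1 = l.1 ++ [a]

theorem prefixGraph_adj_of_append {l l' : {l // p l}} {a : α} (h : l'.1 = l.1 ++ [a]) :
    (prefixGraph p).Adj l l' :=
  (SimpleGraph.fromRel_adj ..).2
    ⟨fun hll' => by simpa [hll'] using congrArg List.length h, .inl ⟨a, h⟩⟩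

theorem prefixGraph_length_ne_of_adj {l l' : {l // p l}} (h : (prefixGraph p).Adj l l') :
    l.1.length ≠ l'.1.length := by
  obtain ⟨-, ⟨a, h⟩ | ⟨a, h⟩⟩ := h <;> simp [h]

theorem prefixGraph_eq_dropLast_of_adj {l l' : {l // p l}} (h : (prefixGraph p).Adj l l')
    (hlt : l'.1.length < l.1.length) : l'.1 = l.1.dropLast := by
  obtain ⟨-, ⟨a, h⟩ | ⟨a, h⟩⟩ := h
  · simp [h] at hlt
  · simp [h]

theorem prefixGraph_isAcyclic : (prefixGraph p).IsAcyclic :=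
  SimpleGraph.isAcyclic_of_unique_lower_neighbor (fun l => l.1.length)
    (fun _ _ => prefixGraph_length_ne_of_adj)
    (fun _ _ _ h h' hlt hlt' => Subtype.ext <|
      (prefixGraph_eq_dropLast_of_adj h hlt).trans (prefixGraph_eq_dropLast_of_adj h' hlt').symm)

theorem prefixGraph_connected (hnil : p []) (hprefix : ∀ l a, p (l ++ [a]) → p l) :
    (prefixGraph p).Connected := by
  have hreach : ∀ l (hl : p l), (prefixGraph p).Reachable ⟨[], hnil⟩ ⟨l, hl⟩ := by
    intro l
    induction l using List.reverseRecOn with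
    | nil => exact fun _ => .refl _
    | append_singleton l a ih =>
      exact fun hl => (ih (hprefix l a hl)).trans (prefixGraph_adj_of_append rfl).reachable
  have : Nonempty {l // p l} := ⟨⟨[], hnil⟩⟩
  exact .mk fun l l' => (hreach l.1 l.2).symm.trans (hreach l'.1 l'.2)

end PrefixGraph

theorem good_of_good_append {Cn Rn : Type} (I : Interp Cn Rn) :
    ∀ (u : I.Dom) (l : List ((Rn ⊕ Rn) × I.Dom)) (a : (Rn ⊕ Rn) × I.Dom),
      good I u (l ++ [a]) → good I u l
  | _, [], _, _ => trivial
  | _, (_, v) :: l, a, ⟨hedge, hturn, hrest⟩ =>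
    ⟨hedge, by cases l; exacts [trivial, hturn], good_of_good_append I v l a hrest⟩

theorem fromRel_unravel_rInt_eq_prefixGraph {Cn Rn : Type} (I : Interp Cn Rn) (r : I.Dom) :
    SimpleGraph.fromRel
        (fun w w' : (unravel I r).Dom => ∃ R, (w, w') ∈ (unravel I r).rInt R) =
      prefixGraph (good I r) := by
  ext w w'
  simp only [SimpleGraph.fromRel_adj, prefixGraph]
  refine and_congr_right fun _ => ⟨?_, ?_⟩
  · rintro (⟨R, ⟨u, h⟩ | ⟨u, h⟩⟩ | ⟨R, ⟨u, h⟩ | ⟨u, h⟩⟩)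
    exacts [.inl ⟨_, h⟩, .inr ⟨_, h⟩, .inr ⟨_, h⟩, .inl ⟨_, h⟩]
  · rintro (⟨⟨R | R, u⟩, h⟩ | ⟨⟨R | R, u⟩, h⟩)
    exacts [.inl ⟨R, .inl ⟨u, h⟩⟩, .inr ⟨R, .inr ⟨u, h⟩⟩, .inr ⟨R, .inl ⟨u, h⟩⟩,
      .inl ⟨R, .inr ⟨u, h⟩⟩]

/-- The g-unraveling is tree-like: the graph on the domain of `I*` whose edges are the
union of all roles and their inverses is a tree (connected and acyclic), and it contains
the root, the singleton walk `(r)` (the empty walk). -/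
theorem unravel_tree_like {Cn Rn : Type} (I : Interp Cn Rn) (r : I.Dom) :
    ∃ root : (unravel I r).Dom, root.1 = [] ∧
      (SimpleGraph.fromRel (fun w w' : (unravel I r).Dom =>
          ∃ R, (w, w') ∈ (unravel I r).rInt R)).Connected ∧
      (SimpleGraph.fromRel (fun w w' : (unravel I r).Dom =>
          ∃ R, (w, w') ∈ (unravel I r).rInt R)).IsAcyclic := by
  rw [fromRel_unravel_rInt_eq_prefixGraph]
  exact ⟨⟨[], trivial⟩, rfl, prefixGraph_connected trivial (good_of_good_append I r),
    prefixGraph_isAcyclic⟩
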